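/- arXiv:1005.5255 — 2 statements merged into one kernel-verified Lean document; each statement's English description precedes it below -/
import Mathlib

section
/- (Von Bahr–Esseen) For any p ∈ (1,2] there is a constant c_p such that for any independent real random variables V_1,...,V_n with E(V_i) = 0 and E|V_i|^p < ∞ for all i, E(|Σ_{i=1}^n V_i|^p) ≤ c_p · Σ_{i=1}^n E(|V_i|^p). -/
open MeasureTheory ProbabilityTheory

/-!
For `1 < p ≤ 2` the derivative `t ↦ p · sign t · |t| ^ (p - 1)` of `|t| ^ p` is Hölder
continuous of exponent `p - 1`, which bounds the first-order Taylor remainder pointwise: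
`|x + y| ^ p ≤ |x| ^ p + p · sign x · |x| ^ (p - 1) · y + 2 |y| ^ p`.
Put `x = V₁ + ⋯ + V_{k-1}` and `y = V_k`: by independence and `E V_k = 0` the middle term has
expectation zero, so `E|V₁ + ⋯ + V_k| ^ p ≤ E|V₁ + ⋯ + V_{k-1}| ^ p + 2 E|V_k| ^ p`, and
induction on `k` gives the inequality with `c_p = 2`.
-/

namespace Real

theorem abs_rpow_sub_rpow_le {x y q : ℝ} (hx : 0 ≤ x) (hy : 0 ≤ y) (hq0 : 0 ≤ q)
    (hq1 : q ≤ 1) :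
    |x ^ q - y ^ q| ≤ |x - y| ^ q := by
  wlog hyx : y ≤ x generalizing x y
  · rw [abs_sub_comm, abs_sub_comm x]
    exact this hy hx (le_of_not_ge hyx)
  have h := rpow_add_le_add_rpow (sub_nonneg.2 hyx) hy hq0 hq1
  rw [sub_add_cancel] at h
  rw [abs_of_nonneg (sub_nonneg.2 (rpow_le_rpow hy hyx hq0)), abs_of_nonneg (sub_nonneg.2 hyx)]
  linarith

end Real

/-- The odd extension `t ↦ sign t * |t| ^ q` of `t ↦ t ^ q`. -/
noncomputable def signedRpow (q t : ℝ) : ℝ := |t| ^ (q - 1) * t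

theorem signedRpow_of_nonneg {q t : ℝ} (hq : 0 < q) (ht : 0 ≤ t) : signedRpow q t = t ^ q := by
  rw [signedRpow, abs_of_nonneg ht, ← Real.rpow_add_one' ht (by linarith), sub_add_cancel]

theorem signedRpow_of_nonpos {q t : ℝ} (hq : 0 < q) (ht : t ≤ 0) :
    signedRpow q t = -(-t) ^ q := by
  rw [← signedRpow_of_nonneg hq (neg_nonneg.2 ht), signedRpow, signedRpow, abs_neg, mul_neg,
    neg_neg]

theorem abs_signedRpow {q : ℝ} (hq : 0 < q) (t : ℝ) : |signedRpow q t| = |t| ^ q := by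
  rw [← signedRpow_of_nonneg hq (abs_nonneg t), signedRpow, signedRpow, abs_mul, abs_abs,
    abs_of_nonneg (Real.rpow_nonneg (abs_nonneg t) _)]

theorem measurable_signedRpow (q : ℝ) : Measurable (signedRpow q) := by
  unfold signedRpow
  fun_prop

theorem abs_signedRpow_sub_le {q : ℝ} (hq0 : 0 < q) (hq1 : q ≤ 1) (a b : ℝ) :
    |signedRpow q a - signedRpow q b| ≤ 2 * |a - b| ^ q := by
  wlog hba : b ≤ a generalizing a b
  · rw [abs_sub_comm, abs_sub_comm a]
    exact this b a (le_of_not_ge hba)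
  have hpos : 0 ≤ |a - b| ^ q := Real.rpow_nonneg (abs_nonneg _) q
  rcases le_total 0 b with hb | hb
  · rw [signedRpow_of_nonneg hq0 hb, signedRpow_of_nonneg hq0 (hb.trans hba)]
    linarith [Real.abs_rpow_sub_rpow_le (hb.trans hba) hb hq0.le hq1]
  rcases le_total a 0 with ha | ha
  · rw [signedRpow_of_nonpos hq0 ha, signedRpow_of_nonpos hq0 hb, neg_sub_neg]
    have h := Real.abs_rpow_sub_rpow_le (neg_nonneg.2 hb) (neg_nonneg.2 ha) hq0.le hq1
    rw [neg_sub_neg] at h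
    linarith
  · rw [signedRpow_of_nonneg hq0 ha, signedRpow_of_nonpos hq0 hb, sub_neg_eq_add,
      abs_of_nonneg (sub_nonneg.2 hba),
      abs_of_nonneg (add_nonneg (Real.rpow_nonneg ha q) (Real.rpow_nonneg (neg_nonneg.2 hb) q))]
    have ha' := Real.rpow_le_rpow ha (show a ≤ a - b by linarith) hq0.le
    have hb' := Real.rpow_le_rpow (neg_nonneg.2 hb) (show -b ≤ a - b by linarith) hq0.le
    linarith

theorem hasDerivAt_abs_rpow_eq_signedRpow {p : ℝ} (hp : 1 < p) (x : ℝ) :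
    HasDerivAt (fun t ↦ |t| ^ p) (p * signedRpow (p - 1) x) x := by
  convert hasDerivAt_abs_rpow x hp using 1
  rw [signedRpow, sub_sub, one_add_one_eq_two, mul_assoc]

theorem mul_signedRpow_sub_mul_le {p : ℝ} (hp1 : 1 < p) (hp2 : p ≤ 2) (x y : ℝ) {s : ℝ}
    (hs : 0 ≤ s) :
    p * (signedRpow (p - 1) (x + s * y) - signedRpow (p - 1) x) * y
      ≤ 2 * (p * s ^ (p - 1)) * |y| ^ p := by
  have hholder := abs_signedRpow_sub_le (q := p - 1) (by linarith) (by linarith) (x + s * y) x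
  rw [add_sub_cancel_left, abs_mul, abs_of_nonneg hs, Real.mul_rpow hs (abs_nonneg y)] at hholder
  have hy : |y| ^ (p - 1) * |y| = |y| ^ p := by
    rw [← Real.rpow_add_one' (abs_nonneg y) (by linarith), sub_add_cancel]
  have hprod : (signedRpow (p - 1) (x + s * y) - signedRpow (p - 1) x) * y
      ≤ 2 * (s ^ (p - 1) * |y| ^ (p - 1)) * |y| := by
    refine (le_abs_self _).trans ?_
    rw [abs_mul]
    exact mul_le_mul_of_nonneg_right hholder (abs_nonneg y)
  calc p * (signedRpow (p - 1) (x + s * y) - signedRpow (p - 1) x) * y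
      ≤ p * (2 * (s ^ (p - 1) * |y| ^ (p - 1)) * |y|) := by
        rw [mul_assoc]
        exact mul_le_mul_of_nonneg_left hprod (by linarith)
    _ = 2 * (p * s ^ (p - 1)) * |y| ^ p := by rw [← hy]; ring

theorem abs_add_rpow_le {p : ℝ} (hp1 : 1 < p) (hp2 : p ≤ 2) (x y : ℝ) :
    |x + y| ^ p ≤ |x| ^ p + p * signedRpow (p - 1) x * y + 2 * |y| ^ p := by
  -- the claim is `ψ 1 ≤ ψ 0`
  set ψ : ℝ → ℝ := fun s ↦
    |x + s * y| ^ p - s * (p * signedRpow (p - 1) x * y) - 2 * s ^ p * |y| ^ p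
  set ψ' : ℝ → ℝ := fun s ↦
    p * signedRpow (p - 1) (x + s * y) * y - p * signedRpow (p - 1) x * y
      - 2 * (p * s ^ (p - 1)) * |y| ^ p
  have hψ : ∀ s, HasDerivAt ψ (ψ' s) s := by
    intro s
    have h1 := (hasDerivAt_abs_rpow_eq_signedRpow hp1 (x + s * y)).comp s
      (((hasDerivAt_id s).mul_const y).const_add x)
    have h2 := (hasDerivAt_id s).mul_const (p * signedRpow (p - 1) x * y)
    have h3 := ((Real.hasDerivAt_rpow_const (x := s) (p := p) (Or.inr hp1.le)).const_mul 2)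
      |>.mul_const (|y| ^ p)
    exact ((h1.sub h2).sub h3).congr_deriv (by simp only [ψ', one_mul])
  have hψ'_nonpos : ∀ s ∈ Set.Ioo (0 : ℝ) 1, ψ' s ≤ 0 := by
    rintro s ⟨hs0, -⟩
    have h := mul_signedRpow_sub_mul_le hp1 hp2 x y hs0.le
    simp only [ψ']
    linarith
  have hanti : AntitoneOn ψ (Set.Icc 0 1) :=
    antitoneOn_of_hasDerivWithinAt_nonpos (convex_Icc 0 1)
      (fun s _ ↦ (hψ s).continuousAt.continuousWithinAt)
      (fun s _ ↦ (hψ s).hasDerivWithinAt) (by rwa [interior_Icc])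
  have h := hanti (Set.left_mem_Icc.2 zero_le_one) (Set.right_mem_Icc.2 zero_le_one) zero_le_one
  simp only [ψ, zero_mul, add_zero, one_mul, Real.zero_rpow (by linarith : p ≠ 0),
    Real.one_rpow, mul_zero, zero_mul, sub_zero] at h
  linarith

section Moments

variable {Ω : Type*} [MeasurableSpace Ω] {P : Measure Ω} {p : ℝ}

theorem integrable_abs_rpow_iff_memLp {X : Ω → ℝ} (hX : AEStronglyMeasurable X P)
    (hp : 0 < p) :
    Integrable (fun ω ↦ |X ω| ^ p) P ↔ MemLp X (ENNReal.ofReal p) P := by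
  rw [← integrable_norm_rpow_iff hX (by simpa using hp) ENNReal.ofReal_ne_top,
    ENNReal.toReal_ofReal hp.le]
  simp only [Real.norm_eq_abs]

variable [IsFiniteMeasure P]

theorem integral_abs_add_rpow_le (hp1 : 1 < p) (hp2 : p ≤ 2) {X Y : Ω → ℝ}
    (hXY : IndepFun X Y P) (hY0 : ∫ ω, Y ω ∂P = 0)
    (hX : MemLp X (ENNReal.ofReal p) P) (hY : MemLp Y (ENNReal.ofReal p) P) :
    ∫ ω, |X ω + Y ω| ^ p ∂P ≤ ∫ ω, |X ω| ^ p ∂P + 2 * ∫ ω, |Y ω| ^ p ∂P := by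
  have hp0 : 0 < p := by linarith
  have hXp := (integrable_abs_rpow_iff_memLp hX.1 hp0).2 hX
  have hYp := (integrable_abs_rpow_iff_memLp hY.1 hp0).2 hY
  have hYint : Integrable Y P := hY.integrable (by simpa using hp1.le)
  set φ : Ω → ℝ := fun ω ↦ signedRpow (p - 1) (X ω)
  have hφ : Integrable φ P := by
    have hX' : MemLp X (ENNReal.ofReal (p - 1)) P :=
      hX.mono_exponent (ENNReal.ofReal_le_ofReal (by linarith))
    refine ((integrable_abs_rpow_iff_memLp hX.1 (by linarith)).2 hX').congr'
      ((measurable_signedRpow _).comp_aemeasurable hX.1.aemeasurable).aestronglyMeasurable ?_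
    filter_upwards with ω
    rw [Real.norm_eq_abs, Real.norm_eq_abs, abs_signedRpow (by linarith),
      abs_of_nonneg (by positivity)]
  have hφY : IndepFun φ Y P := hXY.comp (measurable_signedRpow _) measurable_id
  have hcross : ∫ ω, φ ω * Y ω ∂P = 0 := by
    rw [← Pi.mul_def, hφY.integral_mul_eq_mul_integral hφ.1 hYint.1, hY0, mul_zero]
  have hcrossInt : Integrable (fun ω ↦ p * (φ ω * Y ω)) P :=
    (hφY.integrable_mul hφ hYint).const_mul p
  have hfirst : Integrable (fun ω ↦ |X ω| ^ p + p * (φ ω * Y ω)) P := hXp.add hcrossInt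
  have hlast : Integrable (fun ω ↦ 2 * |Y ω| ^ p) P := hYp.const_mul 2
  calc ∫ ω, |X ω + Y ω| ^ p ∂P
      ≤ ∫ ω, |X ω| ^ p + p * (φ ω * Y ω) + 2 * |Y ω| ^ p ∂P := by
        refine integral_mono_of_nonneg (ae_of_all _ fun ω ↦ by positivity) (hfirst.add hlast)
          (ae_of_all _ fun ω ↦ ?_)
        simpa only [mul_assoc] using abs_add_rpow_le hp1 hp2 (X ω) (Y ω)
    _ = ∫ ω, |X ω| ^ p ∂P + 2 * ∫ ω, |Y ω| ^ p ∂P := by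
        rw [integral_add hfirst hlast, integral_add hXp hcrossInt, integral_const_mul,
          integral_const_mul, hcross, mul_zero, add_zero]

theorem integral_abs_sum_rpow_le (hp1 : 1 < p) (hp2 : p ≤ 2) {ι : Type*} {V : ι → Ω → ℝ}
    (hV : iIndepFun V P) (hV0 : ∀ i, ∫ ω, V i ω ∂P = 0)
    (hVp : ∀ i, MemLp (V i) (ENNReal.ofReal p) P) (s : Finset ι) :
    ∫ ω, |∑ i ∈ s, V i ω| ^ p ∂P ≤ 2 * ∑ i ∈ s, ∫ ω, |V i ω| ^ p ∂P := by
  classical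
  induction s using Finset.induction_on with
  | empty => simp [Real.zero_rpow (by linarith : p ≠ 0)]
  | insert i s hi ih =>
    have hstep := integral_abs_add_rpow_le hp1 hp2
      (hV.indepFun_finsetSum_of_notMem₀ (fun j ↦ (hVp j).1.aemeasurable) hi) (hV0 i)
      (memLp_finsetSum' s fun j _ ↦ hVp j) (hVp i)
    simp only [Finset.sum_apply] at hstep
    simp only [Finset.sum_insert hi, add_comm (V i _)]
    linarith

end Moments

/-- Von Bahr–Esseen inequality: for `p ∈ (1,2]` there is a constant `c_p` such that for any
independent centered real random variables `V₁,…,V_n` with finite `p`-th moments,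
`E|Σ V_i|^p ≤ c_p Σ E|V_i|^p`. -/
theorem stmt_12 (p : ℝ) (hp1 : 1 < p) (hp2 : p ≤ 2) :
    ∃ c : ℝ, 0 < c ∧
      ∀ (Ω : Type) [MeasurableSpace Ω] (P : Measure Ω), IsProbabilityMeasure P →
      ∀ (n : ℕ) (V : Fin n → Ω → ℝ),
        iIndepFun V P →
        (∀ i, Integrable (V i) P) →
        (∀ i, (∫ ω, V i ω ∂P) = 0) →
        (∀ i, Integrable (fun ω => |V i ω| ^ p) P) →
        (∫ ω, |∑ i, V i ω| ^ p ∂P) ≤ c * ∑ i, ∫ ω, |V i ω| ^ p ∂P := by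
  refine ⟨2, two_pos, fun Ω _ P _ n V hV hint hV0 hVp ↦ ?_⟩
  exact integral_abs_sum_rpow_le hp1 hp2 hV hV0
    (fun i ↦ (integrable_abs_rpow_iff_memLp (hint i).1 (by linarith)).1 (hVp i)) Finset.univ
end

section
/- For s < t in [0,1) and b ≥ 2, let j ≥ 0 be the unique integer such that the b-adic words of s and t satisfy s|_j⁺ = t|_j and s|_{j+1}⁺ ≠ t|_{j+1} (where w⁺ denotes the b-adic successor of the word w at the same generation). Then b^{-(j+1)} ≤ t − s ≤ 2b^{-j}. -/
/-! Write `x|_n` as `⌊x bⁿ⌋`. Refining a word multiplies its index by `b` and adds a digit, so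
if `t|_j = s|_j⁺` then `t|_{j+1}` lies strictly beyond `s|_{j+1}`; since it is not `s|_{j+1}⁺`,
the two level-`(j+1)` indices differ by at least `2`, and the points by more than `b^{-(j+1)}`.
At level `j` the indices differ by exactly `1`, so the points differ by less than `2 b^{-j}`. -/

section FloorRing

variable {R : Type*} [Ring R] [LinearOrder R] [IsStrictOrderedRing R] [FloorRing R]

theorem Int.floor_mul_natCast_lt_floor_mul_natCast_of_floor_add_one_eq {x y : R} {n : ℕ}
    (hn : n ≠ 0) (h : ⌊x⌋ + 1 = ⌊y⌋) : ⌊x * n⌋ < ⌊y * n⌋ := by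
  rw [← Int.mul_natCast_floor_div_cancel hn x, ← Int.mul_natCast_floor_div_cancel hn y] at h
  calc ⌊x * n⌋ < (⌊x * n⌋ / n + 1) * n := Int.lt_ediv_add_one_mul_self _ (by omega)
    _ = ⌊y * n⌋ / n * n := by rw [h]
    _ ≤ ⌊y * n⌋ := Int.ediv_mul_le _ (by omega)

end FloorRing

section CommFloorRing

variable {R : Type*} [CommRing R] [LinearOrder R] [IsStrictOrderedRing R] [FloorRing R]

theorem Int.sub_one_lt_sub_of_floor_add_le {x y : R} {k : ℤ} (h : ⌊x⌋ + k ≤ ⌊y⌋) :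
    (k : R) - 1 < y - x := by
  have hk : ((⌊x⌋ + k : ℤ) : R) ≤ ⌊y⌋ := by exact_mod_cast h
  push_cast at hk
  linarith [Int.floor_le y, Int.lt_floor_add_one x]

theorem Int.sub_lt_add_one_of_floor_le_add {x y : R} {k : ℤ} (h : ⌊y⌋ ≤ ⌊x⌋ + k) :
    y - x < k + 1 := by
  have hk : (⌊y⌋ : R) ≤ ((⌊x⌋ + k : ℤ) : R) := by exact_mod_cast h
  push_cast at hk
  linarith [Int.floor_le x, Int.lt_floor_add_one y]

end CommFloorRing

theorem stmt_17_general (b : ℕ) (hb : 2 ≤ b) (s t : ℝ) (j : ℕ)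
    (hj : ⌊s * (b : ℝ) ^ j⌋ + 1 = ⌊t * (b : ℝ) ^ j⌋)
    (hj1 : ⌊s * (b : ℝ) ^ (j + 1)⌋ + 1 ≠ ⌊t * (b : ℝ) ^ (j + 1)⌋) :
    (b : ℝ) ^ (-(j + 1 : ℤ)) ≤ t - s ∧ t - s ≤ 2 * (b : ℝ) ^ (-(j : ℤ)) := by
  have hpow (n : ℕ) : (0 : ℝ) < (b : ℝ) ^ n := pow_pos (by positivity) n
  have hgap : ⌊s * (b : ℝ) ^ (j + 1)⌋ + 2 ≤ ⌊t * (b : ℝ) ^ (j + 1)⌋ := by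
    have := Int.floor_mul_natCast_lt_floor_mul_natCast_of_floor_add_one_eq (n := b) (by omega) hj
    simp only [mul_assoc, ← pow_succ] at this
    omega
  have hlower : 1 < (t - s) * (b : ℝ) ^ (j + 1) := by
    have := Int.sub_one_lt_sub_of_floor_add_le hgap
    norm_num at this
    linarith
  have hupper : (t - s) * (b : ℝ) ^ j < 2 := by
    have := Int.sub_lt_add_one_of_floor_le_add hj.ge
    norm_num at this
    linarith
  rw [zpow_neg, zpow_neg, ← Nat.cast_add_one, zpow_natCast, zpow_natCast]
  constructor
  · rw [inv_le_iff_one_le_mul₀' (hpow _)]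
    linarith
  · rw [← div_eq_mul_inv, le_div_iff₀ (hpow _)]
    linarith

/-- For `s < t` in `[0,1)`, if `j` is the generation at which the `b`-adic word of `t` is the
successor of that of `s` (encoded by `⌊s·b^j⌋ + 1 = ⌊t·b^j⌋`) while at generation `j+1` the
word of `t` is not the successor of that of `s`, then `b^{-(j+1)} ≤ t - s ≤ 2·b^{-j}`.
Here the word `x|_n` of length `n` of `x` is encoded by the integer `⌊x·b^n⌋`, and the
successor word `w⁺` corresponds to adding `1` to this integer. -/
theorem stmt_17 (b : ℕ) (hb : 2 ≤ b) (s t : ℝ) (hs : s ∈ Set.Ico (0 : ℝ) 1)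
    (ht : t ∈ Set.Ico (0 : ℝ) 1) (hst : s < t) (j : ℕ)
    (hj : ⌊s * (b : ℝ) ^ j⌋ + 1 = ⌊t * (b : ℝ) ^ j⌋)
    (hj1 : ⌊s * (b : ℝ) ^ (j + 1)⌋ + 1 ≠ ⌊t * (b : ℝ) ^ (j + 1)⌋) :
    (b : ℝ) ^ (-(j + 1 : ℤ)) ≤ t - s ∧ t - s ≤ 2 * (b : ℝ) ^ (-(j : ℤ)) :=
  stmt_17_general b hb s t j hj hj1
end
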